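/- arXiv:2604.02495 — 2 statements merged into one kernel-verified Lean document; each statement's English description precedes it below -/
import Mathlib

section
/- Let S be a finite semigroup with a rank labelling ρ : S → ℕ, and let k be the maximum value attained by ρ on S. Suppose α, β, γ ∈ S satisfy ρ(α) = ρ(β) = ρ(γ) = k, ρ(α·β) = r with r < k, α·β·γ = β·γ, and ρ(β·γ) = r. Let X = {s ∈ S : ρ(s) ≥ r + 1} and R = {(x_s·x_t, x_{st}) : ρ(s) ≥ r+1, ρ(t) ≥ r+1, ρ(s·t) ≥ r+1}. Then the pair (x_α·x_β·x_γ, x_β·x_γ) does NOT lie in the congruence on FreeSemigroup X generated by R; that is, x_α x_β x_γ = x_β x_γ is not a consequence of R. -/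
/-- The principal two-sided ideal generated by `y`. -/
def Jset {S : Type*} [Semigroup S] (y : S) : Set S :=
  {y} ∪ {z | ∃ s, z = s * y} ∪ {z | ∃ s, z = y * s} ∪ {z | ∃ s t, z = s * y * t}

/-- `ρ` is a rank labelling of `S`: it reflects the inclusion order of principal ideals;
in particular the `J`-classes of `S` form a chain. -/
def IsRankLabelling {S : Type*} [Semigroup S] (ρ : S → ℕ) : Prop :=
  ∀ x y : S, ρ x ≤ ρ y ↔ Jset x ⊆ Jset y

/-- The relations of the Cayley table presentation of `S` restricted to elements
of rank at least `i`. -/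
def rankCayleyRel {S : Type*} [Semigroup S] (ρ : S → ℕ) (i : ℕ) :
    FreeSemigroup {s : S // i ≤ ρ s} → FreeSemigroup {s : S // i ≤ ρ s} → Prop := fun u v =>
  ∃ (s t : S) (hs : i ≤ ρ s) (ht : i ≤ ρ t) (hst : i ≤ ρ (s * t)),
    u = FreeSemigroup.of ⟨s, hs⟩ * FreeSemigroup.of ⟨t, ht⟩ ∧
    v = FreeSemigroup.of ⟨s * t, hst⟩

/-!
Send a word `w` over `X` to its value in `S` together with the contexts `(a, b) ∈ S¹ × S¹` in
which `w` has a factorization `w = u v` with `β ∈ a[u]S¹`, `γ ∈ S¹[v]b` and `a[u][v]b = βγ`.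
This is a homomorphism into a suitable semigroup, and both sides of every relation of rank
`≥ r + 1` have the same image: the only new factorization `x_s | x_t` of the left side cannot
qualify, since it would force `ρ(st) ≤ ρ(βγ) = r`. In the context `(1, 1)`, however, `x_β x_γ`
has a qualifying factorization and `x_α x_β x_γ` has none, as `ρ(αβ) = ρ(βγ) = r < k`.
-/

section StableMonoid

variable {M : Type*} [Monoid M]

theorem eq_pow_mul_mul_pow_of_eq_mul_mul {m P Q : M} (h : m = P * m * Q) (n : ℕ) :
    m = P ^ n * m * Q ^ n := by
  induction n with
  | zero => simp
  | succ n ih =>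
    calc m = P * m * Q := h
      _ = P * (P ^ n * m * Q ^ n) * Q := by rw [← ih]
      _ = P ^ (n + 1) * m * Q ^ (n + 1) := by rw [pow_succ' P, pow_succ Q]; simp only [mul_assoc]

/-- Finite monoids are stable. -/
theorem exists_eq_mul_mul_of_eq_mul_mul [Finite M] {m P Q : M} (h : m = P * m * Q) :
    (∃ x, m = x * (P * m)) ∧ ∃ y, m = m * Q * y := by
  obtain ⟨i, j, hij, hPQ⟩ := Set.finite_univ.exists_lt_map_eq_of_forall_mem
    (f := fun n : ℕ => (P ^ n, Q ^ n)) fun _ => Set.mem_univ _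
  obtain ⟨hP, hQ⟩ := Prod.mk.inj hPQ
  obtain ⟨d, rfl⟩ := Nat.exists_eq_add_of_lt hij
  have hi := eq_pow_mul_mul_pow_of_eq_mul_mul h i
  refine ⟨⟨P ^ d, ?_⟩, ⟨Q ^ d, ?_⟩⟩
  · have hP' : P ^ i = P ^ d * P * P ^ i := by
      rw [← pow_succ, ← pow_add, hP, add_comm (d + 1)]; rfl
    calc m = P ^ i * m * Q ^ i := hi
      _ = P ^ d * P * P ^ i * m * Q ^ i := by rw [← hP']
      _ = P ^ d * (P * (P ^ i * m * Q ^ i)) := by simp only [mul_assoc]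
      _ = P ^ d * (P * m) := by rw [← hi]
  · have hQ' : Q ^ i = Q ^ i * Q * Q ^ d := by
      rw [mul_assoc, ← pow_succ', ← pow_add, hQ]; rfl
    calc m = P ^ i * m * Q ^ i := hi
      _ = P ^ i * m * (Q ^ i * Q * Q ^ d) := by rw [← hQ']
      _ = P ^ i * m * Q ^ i * Q * Q ^ d := by simp only [mul_assoc]
      _ = m * Q * Q ^ d := by rw [← hi]

end StableMonoid

instance WithOne.instFinite {S : Type*} [Finite S] : Finite (WithOne S) :=
  inferInstanceAs (Finite (Option S))

section Rank

variable {S : Type*} [Semigroup S]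

theorem mem_Jset_iff {x y : S} : x ∈ Jset y ↔ ∃ p q : WithOne S, (x : WithOne S) = p * y * q := by
  simp only [Jset, WithOne.exists, Set.mem_union, Set.mem_singleton_iff, Set.mem_ofPred_eq, one_mul,
    mul_one, ← WithOne.coe_mul, WithOne.coe_inj, exists_or]
  tauto

theorem Jset_subset_Jset_iff {x y : S} : Jset x ⊆ Jset y ↔ x ∈ Jset y := by
  refine ⟨fun h => h (Or.inl (Or.inl (Or.inl rfl))), fun hx z hz => ?_⟩
  obtain ⟨p, q, hxy⟩ := mem_Jset_iff.1 hx
  obtain ⟨p', q', hzx⟩ := mem_Jset_iff.1 hz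
  exact mem_Jset_iff.2 ⟨p' * p, q * q', by rw [hzx, hxy]; simp only [mul_assoc]⟩

theorem IsRankLabelling.le_iff_exists {ρ : S → ℕ} (hρ : IsRankLabelling ρ) {x y : S} :
    ρ x ≤ ρ y ↔ ∃ p q : WithOne S, (x : WithOne S) = p * y * q := by
  rw [hρ, Jset_subset_Jset_iff, mem_Jset_iff]

end Rank

/-- The image of a word `w` records its value and the contexts `(a, b)` in which some
factorization `w = u v` satisfies `C (a [u]) ([v] b)`; this is compatible with concatenation. -/
@[ext]
structure SplitProfile (S : Type*) (C : WithOne S → WithOne S → Prop) where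
  val : S
  good : WithOne S → WithOne S → Prop

namespace SplitProfile

variable {S : Type*} [Semigroup S] {C : WithOne S → WithOne S → Prop}

instance : Mul (SplitProfile S C) where
  mul p q := ⟨p.val * q.val, fun a b => C (a * p.val) (q.val * b) ∨ p.good a (q.val * b) ∨
    q.good (a * p.val) b⟩

theorem mul_val (p q : SplitProfile S C) : (p * q).val = p.val * q.val := rfl

theorem mul_good (p q : SplitProfile S C) (a b : WithOne S) :
    (p * q).good a b ↔ C (a * p.val) (q.val * b) ∨ p.good a (q.val * b) ∨
      q.good (a * p.val) b := Iff.rfl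

instance : Semigroup (SplitProfile S C) where
  mul_assoc p q r := by
    ext a b
    · exact mul_assoc p.val q.val r.val
    · simp only [mul_good, mul_val, WithOne.coe_mul, mul_assoc]
      tauto

def of (s : S) : SplitProfile S C := ⟨s, fun _ _ => False⟩

theorem of_mul_of_eq_of_iff (s t : S) :
    (of s * of t : SplitProfile S C) = of (s * t) ↔ ∀ a b, ¬ C (a * s) (t * b) := by
  simp only [SplitProfile.ext_iff, mul_val, of, mul_good, or_false, true_and, funext_iff, eq_iff_iff,
    iff_false]

end SplitProfile

theorem rankCayleyRel_le_ker_lift {S : Type*} [Semigroup S] {ρ : S → ℕ} {i : ℕ}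
    {C : WithOne S → WithOne S → Prop}
    (hC : ∀ s t : S, i ≤ ρ (s * t) → ∀ a b, ¬ C (a * s) (t * b)) :
    rankCayleyRel ρ i ≤
      ⇑(Con.ker (FreeSemigroup.lift fun x : {s : S // i ≤ ρ s} => SplitProfile.of (C := C) x.1)) := by
  rintro _ _ ⟨s, t, -, -, hst, rfl, rfl⟩
  rw [Con.ker_rel, map_mul, FreeSemigroup.lift_of, FreeSemigroup.lift_of, FreeSemigroup.lift_of]
  exact (SplitProfile.of_mul_of_eq_of_iff s t).2 (hC s t hst)

section Split

variable {S : Type*} [Semigroup S] {ρ : S → ℕ} {β γ : S}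

def IsSplitOf (β γ : S) (m n : WithOne S) : Prop :=
  (∃ q, (β : WithOne S) = m * q) ∧ (∃ q, (γ : WithOne S) = q * n) ∧ m * n = β * γ

theorem isSplitOf_self : IsSplitOf β γ β γ :=
  ⟨⟨1, (mul_one _).symm⟩, ⟨1, (one_mul _).symm⟩, rfl⟩

theorem IsSplitOf.rank_le_left (hρ : IsRankLabelling ρ) {x : S} {n : WithOne S}
    (h : IsSplitOf β γ x n) : ρ β ≤ ρ x := by
  obtain ⟨⟨q, hq⟩, -, -⟩ := h
  exact hρ.le_iff_exists.2 ⟨1, q, by rw [hq, one_mul]⟩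

theorem IsSplitOf.rank_le_right (hρ : IsRankLabelling ρ) {m : WithOne S} {y : S}
    (h : IsSplitOf β γ m y) : ρ γ ≤ ρ y := by
  obtain ⟨-, ⟨q, hq⟩, -⟩ := h
  exact hρ.le_iff_exists.2 ⟨q, 1, by rw [hq, mul_one]⟩

theorem not_isSplitOf_mul [Finite S] (hρ : IsRankLabelling ρ) (hβ : ∀ s, ρ s ≤ ρ β)
    (hγ : ∀ s, ρ s ≤ ρ γ) {s t : S} (hst : ρ (β * γ) < ρ (s * t)) (a b : WithOne S) :
    ¬ IsSplitOf β γ (a * s) (t * b) := by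
  rintro ⟨⟨q, hq⟩, ⟨q', hq'⟩, hsplit⟩
  obtain ⟨p₁, p₂, hs⟩ := hρ.le_iff_exists.1 (hβ s)
  obtain ⟨p₃, p₄, ht⟩ := hρ.le_iff_exists.1 (hγ t)
  -- `s` is `J`-equivalent to `a s`, hence, by stability, `L`-equivalent to it; dually for `t`.
  have hs_sandwich : (s : WithOne S) = p₁ * a * s * (q * p₂) := by
    conv_lhs => rw [hs, hq]
    simp only [mul_assoc]
  have ht_sandwich : (t : WithOne S) = p₃ * q' * t * (b * p₄) := by
    conv_lhs => rw [ht, hq']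
    simp only [mul_assoc]
  obtain ⟨⟨x, hx⟩, -⟩ := exists_eq_mul_mul_of_eq_mul_mul hs_sandwich
  obtain ⟨-, ⟨y, hy⟩⟩ := exists_eq_mul_mul_of_eq_mul_mul ht_sandwich
  have hst_le : ρ (s * t) ≤ ρ (β * γ) := by
    refine hρ.le_iff_exists.2 ⟨x * p₁, p₄ * y, ?_⟩
    calc ((s * t : S) : WithOne S) = x * (p₁ * a * s) * (t * (b * p₄) * y) := by
          rw [WithOne.coe_mul, ← hx, ← hy]
      _ = x * p₁ * (a * s * (t * b)) * (p₄ * y) := by simp only [mul_assoc]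
      _ = x * p₁ * ↑(β * γ) * (p₄ * y) := by rw [hsplit, WithOne.coe_mul]
  exact hst.not_ge hst_le

end Split

/-- If `α, β, γ` have maximal rank `k`, `ρ(αβ) = ρ(βγ) = r < k` and `αβγ = βγ`,
then `x_α x_β x_γ = x_β x_γ` is not a consequence of the relations of rank `≥ r + 1`. -/
theorem stmt_3 {S : Type*} [Semigroup S] [Finite S]
    (ρ : S → ℕ) (hρ : IsRankLabelling ρ) (k : ℕ) (hk : ∀ s : S, ρ s ≤ k)
    (α β γ : S) (r : ℕ) (hα : ρ α = k) (hβ : ρ β = k) (hγ : ρ γ = k)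
    (hαβ : ρ (α * β) = r) (hrk : r < k)
    (hβγ : ρ (β * γ) = r) :
    ¬ conGen (rankCayleyRel ρ (r + 1))
      (FreeSemigroup.of ⟨α, by omega⟩ * FreeSemigroup.of ⟨β, by omega⟩ *
        FreeSemigroup.of ⟨γ, by omega⟩)
      (FreeSemigroup.of ⟨β, by omega⟩ * FreeSemigroup.of ⟨γ, by omega⟩) := by
  intro h
  have hker := Con.conGen_le.2 (rankCayleyRel_le_ker_lift (C := IsSplitOf β γ)
    fun s t hst => not_isSplitOf_mul hρ (fun s => hβ ▸ hk s) (fun s => hγ ▸ hk s) (by omega)) h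
  have hgood := congrArg (fun p => p.good 1 1) ((Con.ker_rel _).1 hker)
  simp only [map_mul, FreeSemigroup.lift_of, SplitProfile.mul_good, SplitProfile.mul_val,
    SplitProfile.of, one_mul, mul_one, or_false] at hgood
  rcases hgood ▸ isSplitOf_self with hsplit | hsplit
  · have := hsplit.rank_le_left hρ
    omega
  · have := IsSplitOf.rank_le_right (y := β * γ) hρ hsplit
    omega
end

section
/- Let n, m, r be natural numbers with m < n and r + n + 1 ≤ 2m. Let α, β, γ be partial bijections of Fin n, each of rank r + 1, such that α·β, β·γ and α·β·γ all have rank r. Then there exists a partial bijection α' of Fin n of rank r + 1 with α'·γ = α·β·γ such that, in the free semigroup on the alphabet X = {μ ∈ I_n : r + 1 ≤ rank(μ) ≤ r + 2}, the pair (x_α·x_β·x_γ, x_{α'}·x_γ) lies in the congruence generated by R = {(x_μ·x_ν, x_{μν}) : r + 1 ≤ rank(μ), rank(ν), rank(μ·ν) ≤ r + 2}. -/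
/-!
Since `αβ` has rank `r < rank α`, some point `a` of the image of `α` lies outside the domain
of `β`. The set `S = im β ∪ dom γ` has `(r + 1) + (r + 1) - r = r + 2 < n` elements, so some
`e ∉ S`. Extending `β` by `a ↦ e` gives `β'` of rank `r + 2` with `β' · id_S = β`,
`id_S · γ = γ`, `β'γ = βγ` and `rank (αβ') = r + 1`. Hence, using only letters and products
of rank `r + 1` or `r + 2`,
`x_α x_β x_γ = x_α x_{β'} x_{id_S} x_γ = x_{αβ'} x_γ`.
-/

/-- The symmetric inverse monoid on `Fin n`: partial bijections under composition
(`α * β` means "first apply `α`, then `β`"). -/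
instance (n : ℕ) : Semigroup (PEquiv (Fin n) (Fin n)) where
  mul := PEquiv.trans
  mul_assoc a b c := by
    show (a.trans b).trans c = a.trans (b.trans c)
    ext x y
    simp [PEquiv.trans, Option.bind_assoc]

/-- The rank of a partial bijection: the cardinality of its domain. -/
noncomputable def prank {n : ℕ} (a : PEquiv (Fin n) (Fin n)) : ℕ :=
  Set.ncard {x : Fin n | (a x).isSome}

/-- The alphabet `X_{i,m}`: partial bijections `a` with `i ≤ rank a ≤ m`. -/
abbrev IX (n m i : ℕ) : Type :=
  {a : PEquiv (Fin n) (Fin n) // i ≤ prank a ∧ prank a ≤ m}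

/-- The relations `R_{i,m}` of the restricted Cayley table presentation. -/
def IRel (n m i : ℕ) : FreeSemigroup (IX n m i) → FreeSemigroup (IX n m i) → Prop :=
  fun u v =>
    ∃ (a b : PEquiv (Fin n) (Fin n)) (ha : i ≤ prank a ∧ prank a ≤ m)
      (hb : i ≤ prank b ∧ prank b ≤ m) (hab : i ≤ prank (a * b) ∧ prank (a * b) ≤ m),
      u = FreeSemigroup.of (⟨a, ha⟩ : IX n m i) * FreeSemigroup.of ⟨b, hb⟩ ∧
      v = FreeSemigroup.of ⟨a * b, hab⟩

namespace PEquiv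

variable {α β γ : Type*}

def dom (f : α ≃. β) : Set α := {a | (f a).isSome}

theorem mem_dom {f : α ≃. β} {a : α} : a ∈ f.dom ↔ (f a).isSome := Iff.rfl

theorem notMem_dom {f : α ≃. β} {a : α} : a ∉ f.dom ↔ f a = none := by
  rw [mem_dom, Option.not_isSome_iff_eq_none]

/-- `f` maps `(f.trans g).dom` injectively onto `f.symm.dom ∩ g.dom`. -/
theorem ncard_dom_trans (f : α ≃. β) (g : β ≃. γ) :
    (f.trans g).dom.ncard = (f.symm.dom ∩ g.dom).ncard := by
  have himage : (⇑f) '' (f.trans g).dom = some '' (f.symm.dom ∩ g.dom) := by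
    ext ob
    constructor
    · rintro ⟨a, ha, rfl⟩
      obtain ⟨c, hc⟩ := Option.isSome_iff_exists.1 ha
      obtain ⟨b, hab, hbc⟩ := (trans_eq_some f g a c).1 hc
      exact ⟨b, ⟨by simp [mem_dom, f.eq_some_iff.2 hab], by simp [mem_dom, hbc]⟩, hab.symm⟩
    · rintro ⟨b, ⟨hb, hbg⟩, rfl⟩
      obtain ⟨a, ha⟩ := Option.isSome_iff_exists.1 hb
      have hab : f a = some b := f.eq_some_iff.1 ha
      exact ⟨a, by simpa [mem_dom, PEquiv.trans, hab] using hbg, hab⟩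
  have hinj : Set.InjOn f (f.trans g).dom := by
    intro a₁ h₁ a₂ _ h
    obtain ⟨b, hb⟩ := Option.isSome_iff_exists.1 (Option.isSome_of_isSome_bind h₁)
    exact f.inj hb (h ▸ hb)
  rw [← hinj.ncard_image, himage, Set.ncard_image_of_injective _ (Option.some_injective β)]

theorem ncard_dom_symm (f : α ≃. β) : f.symm.dom.ncard = f.dom.ncard := by
  have h := ncard_dom_trans f (PEquiv.refl β)
  rwa [trans_refl, show (PEquiv.refl β).dom = Set.univ from Set.eq_univ_of_forall fun _ => rfl,
    Set.inter_univ, eq_comm] at h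

section OfSet

variable (s : Set α) [DecidablePred (· ∈ s)]

theorem dom_ofSet : (ofSet s).dom = s := by
  ext a
  by_cases ha : a ∈ s <;> simp [mem_dom, ofSet, ha]

variable {s}

theorem ofSet_trans_of_dom_subset {g : α ≃. β} (h : g.dom ⊆ s) : (ofSet s).trans g = g := by
  ext a b
  by_cases ha : a ∈ s
  · simp [PEquiv.trans, ofSet, ha]
  · simp [PEquiv.trans, ofSet, ha, notMem_dom.1 fun hg => ha (h hg)]

theorem trans_ofSet_of_dom_symm_subset {f : β ≃. α} (h : f.symm.dom ⊆ s) :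
    f.trans (ofSet s) = f :=
  symm_injective <| ofSet_trans_of_dom_subset h

end OfSet

section AddPair

variable [DecidableEq α] [DecidableEq β]

def addPair (f : α ≃. β) (a : α) (b : β) (ha : f a = none) (hb : f.symm b = none) :
    α ≃. β where
  toFun x := if x = a then some b else f x
  invFun y := if y = b then some a else f.symm y
  inv x y := by
    split_ifs with hy hx hx
    · simp [hx, hy]
    · simp only [Option.some.injEq, hy]
      exact ⟨fun h => absurd h.symm hx, fun h => by simp [f.eq_some_iff.2 h] at hb⟩
    · simp only [Option.some.injEq, hx]
      exact ⟨fun h => by simp [f.eq_some_iff.1 h] at ha, fun h => absurd h.symm hy⟩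
    · exact f.mem_iff_mem

variable (f : α ≃. β) {a : α} {b : β} (ha : f a = none) (hb : f.symm b = none)

theorem dom_addPair : (f.addPair a b ha hb).dom = insert a f.dom := by
  ext x
  by_cases hx : x = a <;> simp [mem_dom, addPair, hx]

theorem addPair_trans_of_eq_none {g : β ≃. γ} (hg : g b = none) :
    (f.addPair a b ha hb).trans g = f.trans g := by
  ext x c
  by_cases hx : x = a
  · simp [PEquiv.trans, addPair, hx, ha, hg]
  · simp [PEquiv.trans, addPair, hx]

end AddPair

end PEquiv

open PEquiv

section Rank

variable {n : ℕ}

theorem prank_mul (a b : PEquiv (Fin n) (Fin n)) :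
    prank (a * b) = (a.symm.dom ∩ b.dom).ncard :=
  ncard_dom_trans a b

theorem prank_symm (a : PEquiv (Fin n) (Fin n)) : prank a.symm = prank a :=
  ncard_dom_symm a

theorem prank_ofSet (s : Set (Fin n)) [DecidablePred (· ∈ s)] : prank (ofSet s) = s.ncard :=
  congrArg Set.ncard (dom_ofSet s)

theorem prank_addPair (f : PEquiv (Fin n) (Fin n)) {a b : Fin n} (ha : f a = none)
    (hb : f.symm b = none) : prank (f.addPair a b ha hb) = prank f + 1 := by
  show (f.addPair a b ha hb).dom.ncard = f.dom.ncard + 1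
  rw [dom_addPair, Set.ncard_insert_of_notMem (notMem_dom.2 ha)]

theorem prank_mul_addPair (c f : PEquiv (Fin n) (Fin n)) {a b : Fin n} (ha : f a = none)
    (hb : f.symm b = none) (hac : a ∈ c.symm.dom) :
    prank (c * f.addPair a b ha hb) = prank (c * f) + 1 := by
  rw [prank_mul, prank_mul, dom_addPair, Set.inter_insert_of_mem hac,
    Set.ncard_insert_of_notMem fun h => notMem_dom.2 ha h.2]

theorem exists_mem_dom_symm_notMem_dom_of_prank_mul_lt {a b : PEquiv (Fin n) (Fin n)}
    (h : prank (a * b) < prank a) : ∃ x ∈ a.symm.dom, x ∉ b.dom := by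
  by_contra! hsub
  rw [prank_mul, Set.inter_eq_left.2 hsub, ← prank_symm] at h
  exact lt_irrefl _ h

theorem ncard_dom_symm_union_dom_add_prank_mul (b c : PEquiv (Fin n) (Fin n)) :
    (b.symm.dom ∪ c.dom).ncard + prank (b * c) = prank b + prank c := by
  rw [prank_mul, Set.ncard_union_add_ncard_inter, ← prank_symm]
  rfl

end Rank

theorem conGen_IRel_of_mul_eq {n m i : ℕ} {a b c : IX n m i} (h : a.val * b.val = c.val) :
    conGen (IRel n m i) (.of a * .of b) (.of c) := by
  obtain ⟨c, hc⟩ := c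
  subst h
  exact ConGen.Rel.of _ _ ⟨a.1, b.1, a.2, b.2, hc, rfl, rfl⟩

theorem conGen_IRel_of_factor {n m i : ℕ} {a b c a' b' d : IX n m i}
    (hab : a.val * b'.val = a'.val) (hb : b'.val * d.val = b.val) (hc : d.val * c.val = c.val) :
    conGen (IRel n m i) (.of a * .of b * .of c) (.of a' * .of c) := by
  have hsplit := (conGen _).mul ((conGen _).mul ((conGen _).refl (.of a))
    ((conGen_IRel_of_mul_eq hb).symm)) ((conGen _).refl (.of c))
  refine (conGen _).trans hsplit ?_
  rw [← mul_assoc, mul_assoc]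
  exact (conGen _).mul (conGen_IRel_of_mul_eq hab) (conGen_IRel_of_mul_eq hc)

/-- In the symmetric inverse monoid, if `α, β, γ` have rank `r + 1` and `αβ`, `βγ`, `αβγ`
all have rank `r`, then there is `α'` of rank `r + 1` with `α'γ = αβγ` such that
`x_α x_β x_γ = x_{α'} x_γ` is a consequence of the Cayley relations among elements of
rank `r + 1` and `r + 2` (assuming `m < n` and `r + n + 1 ≤ 2m`). -/
theorem stmt_11 (n m r : ℕ) (hm : m < n) (hr : r + n + 1 ≤ 2 * m)
    (α β γ : PEquiv (Fin n) (Fin n))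
    (hα : prank α = r + 1) (hβ : prank β = r + 1) (hγ : prank γ = r + 1)
    (hαβ : prank (α * β) = r) (hβγ : prank (β * γ) = r) :
    ∃ α' : IX n (r + 2) (r + 1), prank α'.val = r + 1 ∧ α'.val * γ = α * β * γ ∧
      conGen (IRel n (r + 2) (r + 1))
        (FreeSemigroup.of (⟨α, by omega⟩ : IX n (r + 2) (r + 1)) *
          FreeSemigroup.of (⟨β, by omega⟩ : IX n (r + 2) (r + 1)) *
          FreeSemigroup.of (⟨γ, by omega⟩ : IX n (r + 2) (r + 1)))
        (FreeSemigroup.of α' *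
          FreeSemigroup.of (⟨γ, by omega⟩ : IX n (r + 2) (r + 1))) := by
  classical
  obtain ⟨a, haα, haβ⟩ :=
    exists_mem_dom_symm_notMem_dom_of_prank_mul_lt (show prank (α * β) < prank α by omega)
  rw [notMem_dom] at haβ
  have hS := ncard_dom_symm_union_dom_add_prank_mul β γ
  set S := β.symm.dom ∪ γ.dom
  obtain ⟨e, he⟩ : ∃ e, e ∉ S := by
    by_contra! hS_univ
    rw [Set.eq_univ_of_forall hS_univ, Set.ncard_univ, Nat.card_eq_fintype_card,
      Fintype.card_fin] at hS
    omega
  have heβ : β.symm e = none := notMem_dom.1 fun h => he (Or.inl h)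
  have heγ : γ e = none := notMem_dom.1 fun h => he (Or.inr h)
  let β' := β.addPair a e haβ heβ
  have hαβ' : prank (α * β') = r + 1 := by rw [prank_mul_addPair _ _ _ _ haα, hαβ]
  have hβ'γ : β' * γ = β * γ := addPair_trans_of_eq_none β haβ heβ heγ
  refine ⟨⟨α * β', by omega⟩, hαβ', by rw [mul_assoc, hβ'γ, mul_assoc], ?_⟩
  refine conGen_IRel_of_factor (b' := ⟨β', ?_⟩) (d := ⟨ofSet S, ?_⟩) rfl ?_ ?_
  · rw [prank_addPair]; omega
  · rw [prank_ofSet]; omega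
  · exact addPair_trans_of_eq_none β haβ heβ (by simp [ofSet, he]) |>.trans
      (trans_ofSet_of_dom_symm_subset Set.subset_union_left)
  · exact ofSet_trans_of_dom_subset Set.subset_union_right
end
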